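/- Let f : ℝⁿ → ℝ be twice continuously differentiable with ∇²f Lipschitz continuous with constant L_H in the operator norm. Let μ ∈ (0, 1), η ∈ (0, 1), β ∈ (0, 1), x ∈ ℝⁿ with x > 0 componentwise, and d ∈ ℝⁿ, d ≠ 0, with ‖X⁻¹X̄d‖∞ ≤ β. Define g = X̄(∇f(x) − μX⁻¹e) and H = X̄(∇²f(x) + μX⁻²)X̄. Suppose that gᵀd ≤ 0 and dᵀHd ≤ −‖d‖³. Then for every α ∈ (0, 1] with α < 3(1 − β)²/((L_H + η)(1 − β)² + (2 − β)), the sufficient-decrease condition holds: φ_μ(x + αX̄d) − φ_μ(x) < −(η/6)·α³‖d‖³. -/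

import Mathlib

open Matrix

/-- The Euclidean norm of a vector in `Fin n → ℝ`. -/
noncomputable def euclNorm {n : ℕ} (v : Fin n → ℝ) : ℝ := Real.sqrt (∑ i, (v i)^2)

/-- The operator norm (induced by the Euclidean norm) of a matrix. -/
noncomputable def opNorm {n : ℕ} (A : Matrix (Fin n) (Fin n) ℝ) : ℝ :=
  ‖Matrix.toEuclideanCLM (𝕜 := ℝ) A‖

/-- The continuous linear map `w ↦ ∑ i, v i * w i`. -/
noncomputable def dotCLM {n : ℕ} (v : Fin n → ℝ) : (Fin n → ℝ) →L[ℝ] ℝ :=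
  ∑ i, v i • (ContinuousLinearMap.proj i : (Fin n → ℝ) →L[ℝ] ℝ)

/-- The continuous linear map `w ↦ A *ᵥ w`. -/
noncomputable def mulVecCLM {n : ℕ} (A : Matrix (Fin n) (Fin n) ℝ) :
    (Fin n → ℝ) →L[ℝ] (Fin n → ℝ) :=
  LinearMap.toContinuousLinearMap A.mulVecLin

/-!
Write `s = αX̄d`. Along the step, `φ_μ` splits into `f`, which is bounded above by its quadratic
Taylor model plus `(L_H/6)‖s‖³`, and the barrier, where `-log(1 + t) ≤ -t + t²/2 + |t|³/(3(1-β))`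
for `|t| ≤ β` is applied to `t = (X⁻¹s)ᵢ`. The first- and second-order terms of the two models add
up exactly to `α gᵀd` and `(α²/2) dᵀHd`, and since `x̄ ≤ 1` and `x̄ ≤ x` both cubic remainders are
at most a multiple of `α³‖d‖³`. The step-size bound makes `-(α²/2)‖d‖³` dominate them.
-/

section EuclNorm

variable {n : ℕ}

lemma euclNorm_eq_norm_toLp (v : Fin n → ℝ) : euclNorm v = ‖WithLp.toLp 2 v‖ := by
  simp [euclNorm, EuclideanSpace.norm_eq]

lemma euclNorm_nonneg (v : Fin n → ℝ) : 0 ≤ euclNorm v := Real.sqrt_nonneg _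

lemma euclNorm_pos {v : Fin n → ℝ} (hv : v ≠ 0) : 0 < euclNorm v := by
  simpa [euclNorm_eq_norm_toLp] using hv

lemma euclNorm_smul (c : ℝ) (v : Fin n → ℝ) : euclNorm (c • v) = |c| * euclNorm v := by
  simp [euclNorm_eq_norm_toLp, WithLp.toLp_smul, norm_smul]

lemma euclNorm_le_euclNorm {v w : Fin n → ℝ} (h : ∀ i, |v i| ≤ |w i|) :
    euclNorm v ≤ euclNorm w :=
  Real.sqrt_le_sqrt <| Finset.sum_le_sum fun i _ => sq_le_sq.mpr (h i)

lemma abs_le_euclNorm (v : Fin n → ℝ) (i : Fin n) : |v i| ≤ euclNorm v := by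
  rw [← Real.sqrt_sq_eq_abs]
  exact Real.sqrt_le_sqrt (Finset.single_le_sum (fun j _ => sq_nonneg (v j)) (Finset.mem_univ i))

lemma sum_abs_pow_three_le_euclNorm_pow_three (v : Fin n → ℝ) :
    ∑ i, |v i| ^ 3 ≤ euclNorm v ^ 3 := by
  have hsq : euclNorm v ^ 2 = ∑ i, v i ^ 2 :=
    Real.sq_sqrt (Finset.sum_nonneg fun i _ => sq_nonneg _)
  calc ∑ i, |v i| ^ 3 = ∑ i, v i ^ 2 * |v i| := by simp only [pow_succ, ← sq_abs (v _)]
    _ ≤ ∑ i, v i ^ 2 * euclNorm v :=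
      Finset.sum_le_sum fun i _ => mul_le_mul_of_nonneg_left (abs_le_euclNorm v i) (sq_nonneg _)
    _ = euclNorm v ^ 3 := by rw [← Finset.sum_mul, ← hsq]; ring

lemma abs_dotProduct_mulVec_le (A : Matrix (Fin n) (Fin n) ℝ) (v : Fin n → ℝ) :
    |v ⬝ᵥ (A *ᵥ v)| ≤ opNorm A * euclNorm v ^ 2 := by
  set u := WithLp.toLp 2 v
  set T := toEuclideanCLM (𝕜 := ℝ) A
  rw [← inner_toEuclideanCLM A u u, euclNorm_eq_norm_toLp, opNorm]
  calc |inner ℝ u (T u)| ≤ ‖u‖ * ‖T u‖ := abs_real_inner_le_norm _ _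
    _ ≤ ‖u‖ * (‖T‖ * ‖u‖) := by gcongr; exact T.le_opNorm u
    _ = ‖T‖ * ‖u‖ ^ 2 := by ring

end EuclNorm

lemma dotCLM_apply {n : ℕ} (v w : Fin n → ℝ) : dotCLM v w = v ⬝ᵥ w := by
  simp [dotCLM, dotProduct]

lemma mulVecCLM_apply {n : ℕ} (A : Matrix (Fin n) (Fin n) ℝ) (w : Fin n → ℝ) :
    mulVecCLM A w = A *ᵥ w := rfl

open Set in
lemma le_taylor_cubic_of_deriv_le {φ ψ χ : ℝ → ℝ} {K : ℝ}
    (hφ : ∀ t, HasDerivAt φ (ψ t) t) (hψ : ∀ t, HasDerivAt ψ (χ t) t)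
    (hχ : ∀ t ∈ Ico (0 : ℝ) 1, χ t ≤ χ 0 + K * t) :
    φ 1 ≤ φ 0 + ψ 0 + χ 0 / 2 + K / 6 := by
  have hψ_le : ∀ t ∈ Icc (0 : ℝ) 1, ψ t ≤ ψ 0 + χ 0 * t + K / 2 * t ^ 2 := by
    refine image_le_of_deriv_right_le_deriv_boundary
      (fun t _ => (hψ t).continuousAt.continuousWithinAt) (fun t _ => (hψ t).hasDerivWithinAt)
      (B' := fun t => χ 0 + K * t) (by simp) (fun t _ => ?_) (fun t _ => ?_) hχ
    · fun_prop
    · exact (((hasDerivAt_id t).const_mul _).const_add _ |>.add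
        ((hasDerivAt_pow 2 t).const_mul _)).hasDerivWithinAt.congr_deriv (by simp; ring)
  have := image_le_of_deriv_right_le_deriv_boundary
      (fun t _ => (hφ t).continuousAt.continuousWithinAt) (fun t _ => (hφ t).hasDerivWithinAt)
      (B := fun t => φ 0 + ψ 0 * t + χ 0 / 2 * t ^ 2 + K / 6 * t ^ 3)
      (B' := fun t => ψ 0 + χ 0 * t + K / 2 * t ^ 2) (by simp) (by fun_prop) (fun t _ => ?_)
      (fun t ht => hψ_le t (Ico_subset_Icc_self ht)) (right_mem_Icc.mpr zero_le_one)
  · simpa using this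
  · exact ((((hasDerivAt_id t).const_mul _).const_add _).add
      ((hasDerivAt_pow 2 t).const_mul _) |>.add
      ((hasDerivAt_pow 3 t).const_mul _)).hasDerivWithinAt.congr_deriv (by simp; ring)

lemma neg_log_one_add_le {t b : ℝ} (hb : b < 1) (ht : |t| ≤ b) :
    -Real.log (1 + t) ≤ -t + t ^ 2 / 2 + |t| ^ 3 / (3 * (1 - b)) := by
  have ht1 : |t| < 1 := ht.trans_lt hb
  -- the tail `∑_{k ≥ 2} (-t)^(k+1)/(k+1)` of the series of `-log (1 + t)`, bounded termwise by
  -- the geometric series `|t|^3/3 ∑ |t|^k`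
  have htail : HasSum (fun k : ℕ => (-t) ^ (k + 2 + 1) / ((k + 2 : ℕ) + 1 : ℝ))
      (-Real.log (1 + t) + t - t ^ 2 / 2) := by
    have h := Real.hasSum_pow_div_log_of_abs_lt_one (x := -t) (by rwa [abs_neg])
    rw [sub_neg_eq_add, ← hasSum_nat_add_iff' 2] at h
    have hval : -Real.log (1 + t) - ∑ i ∈ Finset.range 2, (-t) ^ (i + 1) / ((i : ℝ) + 1)
        = -Real.log (1 + t) + t - t ^ 2 / 2 := by
      norm_num [Finset.sum_range_succ]; ring
    rwa [hval] at h
  have hgeom : HasSum (fun k : ℕ => |t| ^ 3 / 3 * |t| ^ k) (|t| ^ 3 / 3 * (1 - |t|)⁻¹) :=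
    (hasSum_geometric_of_lt_one (abs_nonneg t) ht1).mul_left _
  have hterm (k : ℕ) : (-t) ^ (k + 2 + 1) / ((k + 2 : ℕ) + 1 : ℝ) ≤ |t| ^ 3 / 3 * |t| ^ k := by
    have hnum : (-t) ^ (k + 2 + 1) ≤ |t| ^ (k + 2 + 1) :=
      (le_abs_self _).trans_eq (by rw [abs_pow, abs_neg])
    have hden : (3 : ℝ) ≤ (k + 2 : ℕ) + 1 := by push_cast; linarith [k.cast_nonneg (α := ℝ)]
    calc (-t) ^ (k + 2 + 1) / ((k + 2 : ℕ) + 1 : ℝ) ≤ |t| ^ (k + 2 + 1) / ((k + 2 : ℕ) + 1 : ℝ) :=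
          div_le_div_of_nonneg_right hnum (by positivity)
      _ ≤ |t| ^ (k + 2 + 1) / 3 := div_le_div_of_nonneg_left (by positivity) (by norm_num) hden
      _ = |t| ^ 3 / 3 * |t| ^ k := by ring
  have hle := hasSum_le hterm htail hgeom
  have hinv : (1 - |t|)⁻¹ ≤ (1 - b)⁻¹ := inv_anti₀ (by linarith) (by linarith)
  have : |t| ^ 3 / 3 * (1 - |t|)⁻¹ ≤ |t| ^ 3 / (3 * (1 - b)) := by
    calc _ ≤ |t| ^ 3 / 3 * (1 - b)⁻¹ := by gcongr
      _ = _ := by field_simp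
  linarith

section Taylor

variable {n : ℕ} {f : (Fin n → ℝ) → ℝ} {gradf : (Fin n → ℝ) → (Fin n → ℝ)}
  {hessf : (Fin n → ℝ) → Matrix (Fin n) (Fin n) ℝ} {L_H : ℝ}

lemma le_taylor_cubic (hgrad : ∀ y, HasFDerivAt f (dotCLM (gradf y)) y)
    (hhess : ∀ y, HasFDerivAt gradf (mulVecCLM (hessf y)) y)
    (hlip : ∀ y z, opNorm (hessf y - hessf z) ≤ L_H * euclNorm (y - z)) (x s : Fin n → ℝ) :
    f (x + s) ≤ f x + gradf x ⬝ᵥ s + s ⬝ᵥ (hessf x *ᵥ s) / 2 + L_H / 6 * euclNorm s ^ 3 := by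
  have hline (t : ℝ) : HasDerivAt (fun t : ℝ => x + t • s) s t := by
    simpa using ((hasDerivAt_id t).smul_const s).const_add x
  have hφ (t : ℝ) : HasDerivAt (fun t => f (x + t • s)) (s ⬝ᵥ gradf (x + t • s)) t := by
    refine ((hgrad _).comp_hasDerivAt t (hline t)).congr_deriv ?_
    rw [dotCLM_apply, dotProduct_comm]
  have hψ (t : ℝ) : HasDerivAt (fun t => s ⬝ᵥ gradf (x + t • s))
      (s ⬝ᵥ (hessf (x + t • s) *ᵥ s)) t := by
    refine ((dotCLM s).hasFDerivAt.comp_hasDerivAt t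
      ((hhess _).comp_hasDerivAt t (hline t))).congr_deriv ?_ |>.congr_of_eventuallyEq ?_
    · rw [mulVecCLM_apply, dotCLM_apply]
    · exact Filter.Eventually.of_forall fun τ => (dotCLM_apply _ _).symm
  have hχ (t : ℝ) (ht : t ∈ Set.Ico (0 : ℝ) 1) :
      s ⬝ᵥ (hessf (x + t • s) *ᵥ s) ≤ s ⬝ᵥ (hessf (x + (0 : ℝ) • s) *ᵥ s)
        + L_H * euclNorm s ^ 3 * t := by
    have hdiff := abs_dotProduct_mulVec_le (hessf (x + t • s) - hessf x) s
    have hL := hlip (x + t • s) x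
    rw [sub_mulVec, dotProduct_sub, abs_le] at hdiff
    rw [add_sub_cancel_left, euclNorm_smul, abs_of_nonneg ht.1] at hL
    simp only [zero_smul, add_zero]
    nlinarith [sq_nonneg (euclNorm s)]
  have h := le_taylor_cubic_of_deriv_le hφ hψ hχ
  simp only [zero_smul, add_zero, one_smul] at h
  linarith [dotProduct_comm s (gradf x)]

lemma log_barrier_sub_le (hgrad : ∀ y, HasFDerivAt f (dotCLM (gradf y)) y)
    (hhess : ∀ y, HasFDerivAt gradf (mulVecCLM (hessf y)) y)
    (hlip : ∀ y z, opNorm (hessf y - hessf z) ≤ L_H * euclNorm (y - z))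
    {μ b : ℝ} (hμ : 0 ≤ μ) (hb : b < 1) {x s : Fin n → ℝ} (hx : ∀ i, 0 < x i)
    (hs : ∀ i, |s i / x i| ≤ b) :
    f (x + s) - μ * ∑ i, Real.log ((x + s) i) - (f x - μ * ∑ i, Real.log (x i))
      ≤ (gradf x ⬝ᵥ s - μ * ∑ i, s i / x i)
        + (s ⬝ᵥ (hessf x *ᵥ s) + μ * ∑ i, (s i / x i) ^ 2) / 2
        + L_H / 6 * euclNorm s ^ 3 + μ * (∑ i, |s i / x i| ^ 3) / (3 * (1 - b)) := by
  have hlog (i : Fin n) : Real.log ((x + s) i) = Real.log (x i) + Real.log (1 + s i / x i) := by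
    have hxi := (hx i).ne'
    have hpos : 0 < 1 + s i / x i := by linarith [(abs_lt.mp ((hs i).trans_lt hb)).1]
    rw [← Real.log_mul hxi hpos.ne', Pi.add_apply, mul_add, mul_div_cancel₀ _ hxi, mul_one]
  have hlog_sum : -∑ i, Real.log (1 + s i / x i) ≤ -∑ i, s i / x i
      + (∑ i, (s i / x i) ^ 2) / 2 + (∑ i, |s i / x i| ^ 3) / (3 * (1 - b)) := by
    simp only [← Finset.sum_neg_distrib, Finset.sum_div, ← Finset.sum_add_distrib]
    exact Finset.sum_le_sum fun i _ => neg_log_one_add_le hb (hs i)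
  have htaylor := le_taylor_cubic hgrad hhess hlip x s
  simp only [hlog, Finset.sum_add_distrib]
  have := mul_le_mul_of_nonneg_left hlog_sum hμ
  rw [mul_div_assoc]
  linarith

end Taylor

section Scaling

variable {n : ℕ}

lemma scaled_barrier_gradient_dotProduct (G w x d : Fin n → ℝ) (μ : ℝ) :
    G ⬝ᵥ (fun i => w i * d i) - μ * ∑ i, w i * d i / x i
      = (fun i => w i * (G i - μ / x i)) ⬝ᵥ d := by
  simp only [dotProduct, Finset.mul_sum, ← Finset.sum_sub_distrib]
  exact Finset.sum_congr rfl fun i _ => by ring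

lemma scaled_barrier_hessian_dotProduct_mulVec (A : Matrix (Fin n) (Fin n) ℝ) (w x d : Fin n → ℝ)
    (μ : ℝ) :
    (fun i => w i * d i) ⬝ᵥ (A *ᵥ fun i => w i * d i) + μ * ∑ i, (w i * d i / x i) ^ 2
      = d ⬝ᵥ ((diagonal w * (A + μ • diagonal fun i => (x i ^ 2)⁻¹) * diagonal w) *ᵥ d) := by
  have hright : diagonal w *ᵥ d = fun i => w i * d i := funext (mulVec_diagonal w d)
  have hleft : d ᵥ* diagonal w = fun i => w i * d i := funext fun i => by
    rw [vecMul_diagonal, mul_comm]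
  rw [← mulVec_mulVec, ← mulVec_mulVec, dotProduct_mulVec d, hleft, hright, add_mulVec,
    dotProduct_add, smul_mulVec, dotProduct_smul, smul_eq_mul]
  congr 2
  simp only [dotProduct, mulVec_diagonal]
  exact Finset.sum_congr rfl fun i _ => by ring

lemma euclNorm_min_one_mul_le {x : Fin n → ℝ} (hx : ∀ i, 0 < x i) (v : Fin n → ℝ) :
    euclNorm (fun i => min (x i) 1 * v i) ≤ euclNorm v :=
  euclNorm_le_euclNorm fun i => by
    rw [abs_mul, abs_of_pos (lt_min (hx i) one_pos)]
    exact mul_le_of_le_one_left (abs_nonneg _) (min_le_right _ _)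

lemma sum_abs_min_one_mul_div_pow_three_le {x : Fin n → ℝ} (hx : ∀ i, 0 < x i)
    (v : Fin n → ℝ) : ∑ i, |min (x i) 1 * v i / x i| ^ 3 ≤ euclNorm v ^ 3 := by
  refine (Finset.sum_le_sum fun i _ => pow_le_pow_left₀ (abs_nonneg _) ?_ 3).trans
    (sum_abs_pow_three_le_euclNorm_pow_three v)
  rw [mul_div_right_comm, abs_mul, abs_of_pos (div_pos (lt_min (hx i) one_pos) (hx i))]
  exact mul_le_of_le_one_left (abs_nonneg _) ((div_le_one (hx i)).mpr (min_le_left _ _))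

end Scaling

lemma cubic_step_decrease {α β L η N : ℝ} (hα : 0 < α) (hN : 0 < N) (hβ0 : 0 ≤ β) (hβ1 : β < 1)
    (hstep : α < 3 * (1 - β) ^ 2 / ((L + η) * (1 - β) ^ 2 + (2 - β))) :
    -(α ^ 2 / 2 * N ^ 3) + L / 6 * α ^ 3 * N ^ 3 + α ^ 3 * N ^ 3 / (3 * (1 - β))
      < -(η / 6) * α ^ 3 * N ^ 3 := by
  have h1β : 0 < 1 - β := by linarith
  have hden : 0 < (L + η) * (1 - β) ^ 2 + (2 - β) := by
    by_contra! h
    exact (hα.trans hstep).not_ge (div_nonpos_of_nonneg_of_nonpos (by positivity) h)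
  rw [lt_div_iff₀ hden] at hstep
  -- `2 (1 - β) ≤ 2 - β` turns the step-size bound into `α ((L + η)(1 - β) + 2) < 3 (1 - β)`
  have hkey : α * ((L + η) * (1 - β) + 2) < 3 * (1 - β) := by
    refine lt_of_mul_lt_mul_right ?_ h1β.le
    nlinarith
  have hfactor : -(α ^ 2 / 2 * N ^ 3) + L / 6 * α ^ 3 * N ^ 3 + α ^ 3 * N ^ 3 / (3 * (1 - β))
      + η / 6 * α ^ 3 * N ^ 3
      = α ^ 2 * N ^ 3 / (6 * (1 - β)) * (α * ((L + η) * (1 - β) + 2) - 3 * (1 - β)) := by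
    field_simp
    ring
  have := mul_neg_of_pos_of_neg (by positivity : 0 < α ^ 2 * N ^ 3 / (6 * (1 - β)))
    (sub_neg.mpr hkey)
  linarith

lemma log_barrier_scaled_step_le {n : ℕ} {f : (Fin n → ℝ) → ℝ}
    {gradf : (Fin n → ℝ) → (Fin n → ℝ)} {hessf : (Fin n → ℝ) → Matrix (Fin n) (Fin n) ℝ}
    {L_H : ℝ} (hgrad : ∀ y, HasFDerivAt f (dotCLM (gradf y)) y)
    (hhess : ∀ y, HasFDerivAt gradf (mulVecCLM (hessf y)) y)
    (hlip : ∀ y z, opNorm (hessf y - hessf z) ≤ L_H * euclNorm (y - z)) (hLH : 0 ≤ L_H)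
    {μ β : ℝ} (hμ0 : 0 ≤ μ) (hμ1 : μ ≤ 1) (hβ : β < 1) {x d : Fin n → ℝ} (hx : ∀ i, 0 < x i)
    (hd : ‖(fun i => min (x i) 1 / x i * d i : Fin n → ℝ)‖ ≤ β) {α : ℝ} (hα0 : 0 ≤ α)
    (hα1 : α ≤ 1) :
    f (x + α • fun i => min (x i) 1 * d i)
        - μ * ∑ i, Real.log ((x + α • fun i => min (x i) 1 * d i) i)
        - (f x - μ * ∑ i, Real.log (x i))
      ≤ α * ((fun i => min (x i) 1 * (gradf x i - μ / x i)) ⬝ᵥ d)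
        + α ^ 2 / 2 * (d ⬝ᵥ ((diagonal (fun i => min (x i) 1)
            * (hessf x + μ • diagonal fun i => (x i ^ 2)⁻¹) * diagonal fun i => min (x i) 1) *ᵥ d))
        + L_H / 6 * α ^ 3 * euclNorm d ^ 3 + α ^ 3 * euclNorm d ^ 3 / (3 * (1 - β)) := by
  have hstep : α • (fun i => min (x i) 1 * d i) = fun i => min (x i) 1 * (α • d) i := by
    funext i; simp only [Pi.smul_apply, smul_eq_mul]; ring
  have hratio (i : Fin n) : |min (x i) 1 * (α • d) i / x i| ≤ β := by
    have hri := (norm_le_pi_norm _ i).trans hd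
    rw [Real.norm_eq_abs] at hri
    rw [show min (x i) 1 * (α • d) i / x i = α * (min (x i) 1 / x i * d i) by
      simp only [Pi.smul_apply, smul_eq_mul]; ring, abs_mul, abs_of_nonneg hα0]
    exact (mul_le_of_le_one_left (abs_nonneg _) hα1).trans hri
  have hbound := log_barrier_sub_le hgrad hhess hlip hμ0 hβ hx hratio
  rw [scaled_barrier_gradient_dotProduct, scaled_barrier_hessian_dotProduct_mulVec, ← hstep,
    dotProduct_smul, mulVec_smul, dotProduct_smul, smul_dotProduct, smul_eq_mul, smul_eq_mul,
    smul_eq_mul] at hbound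
  have hαd : euclNorm (α • d) = α * euclNorm d := by rw [euclNorm_smul, abs_of_nonneg hα0]
  have hcubic_f : L_H / 6 * euclNorm (α • fun i => min (x i) 1 * d i) ^ 3
      ≤ L_H / 6 * α ^ 3 * euclNorm d ^ 3 := by
    rw [mul_assoc, ← mul_pow, hstep, ← hαd]
    gcongr
    · exact euclNorm_nonneg _
    · exact euclNorm_min_one_mul_le hx _
  have hcubic_barrier : μ * (∑ i, |min (x i) 1 * (α • d) i / x i| ^ 3) / (3 * (1 - β))
      ≤ α ^ 3 * euclNorm d ^ 3 / (3 * (1 - β)) := by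
    refine div_le_div_of_nonneg_right ?_ (by linarith)
    rw [← mul_pow, ← hαd]
    exact (mul_le_of_le_one_left (by positivity) hμ1).trans
      (sum_abs_min_one_mul_div_pow_three_le hx _)
  linarith

theorem stmt12_general {n : ℕ}
    (f : (Fin n → ℝ) → ℝ)
    (gradf : (Fin n → ℝ) → (Fin n → ℝ))
    (hessf : (Fin n → ℝ) → Matrix (Fin n) (Fin n) ℝ)
    (hgrad : ∀ y : Fin n → ℝ, HasFDerivAt f (dotCLM (gradf y)) y)
    (hhess : ∀ y : Fin n → ℝ, HasFDerivAt gradf (mulVecCLM (hessf y)) y)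
    (L_H : ℝ) (hLH : 0 ≤ L_H)
    (hlip : ∀ y z : Fin n → ℝ, opNorm (hessf y - hessf z) ≤ L_H * euclNorm (y - z))
    (μ : ℝ) (hμ : μ ∈ Set.Ioo (0:ℝ) 1)
    (η : ℝ)
    (β : ℝ) (hβ : β ∈ Set.Ioo (0:ℝ) 1)
    (x : Fin n → ℝ) (hx : ∀ i, 0 < x i)
    (d : Fin n → ℝ) (hdne : d ≠ 0)
    (hd : ‖(fun i => (min (x i) 1 / x i) * d i : Fin n → ℝ)‖ ≤ β)
    (g : Fin n → ℝ)
    (hg : g = fun i => min (x i) 1 * (gradf x i - μ / x i))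
    (H : Matrix (Fin n) (Fin n) ℝ)
    (hH : H = Matrix.diagonal (fun i => min (x i) 1)
        * (hessf x + μ • Matrix.diagonal (fun i => ((x i)^2)⁻¹))
        * Matrix.diagonal (fun i => min (x i) 1))
    (hgd : g ⬝ᵥ d ≤ 0)
    (hcurv : d ⬝ᵥ (H *ᵥ d) ≤ -(euclNorm d ^ 3)) :
    ∀ α ∈ Set.Ioc (0:ℝ) 1,
      α < 3 * (1-β)^2 / ((L_H + η) * (1-β)^2 + (2-β)) →
      f (x + α • (fun i => min (x i) 1 * d i : Fin n → ℝ))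
          - μ * ∑ i, Real.log ((x + α • (fun i => min (x i) 1 * d i : Fin n → ℝ)) i)
        - (f x - μ * ∑ i, Real.log (x i))
        < -(η/6) * α^3 * euclNorm d ^ 3 := by
  rintro α ⟨hα0, hα1⟩ hαlt
  subst hg hH
  have hbound := log_barrier_scaled_step_le hgrad hhess hlip hLH hμ.1.le hμ.2.le hβ.2 hx hd
    hα0.le hα1
  have hdecrease := cubic_step_decrease hα0 (euclNorm_pos hdne) hβ.1.le hβ.2 hαlt
  have hfirst := mul_nonpos_of_nonneg_of_nonpos hα0.le hgd
  have hsecond := mul_le_mul_of_nonneg_left hcurv (by positivity : 0 ≤ α ^ 2 / 2)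
  linarith

/-- with `f` twice continuously differentiable, Hessian `L_H`-Lipschitz in
operator norm, `μ, η, β ∈ (0,1)`, `x > 0`, `d ≠ 0` with `‖X⁻¹X̄d‖∞ ≤ β`,
`g = X̄(∇f(x) − μX⁻¹e)`, `H = X̄(∇²f(x) + μX⁻²)X̄`, and suppose `gᵀd ≤ 0` and
`dᵀHd ≤ −‖d‖³`. Then for every `α ∈ (0,1]` with
`α < 3(1−β)²/((L_H + η)(1−β)² + (2−β))`, the sufficient-decrease condition holds:
`φ_μ(x + αX̄d) − φ_μ(x) < −(η/6)α³‖d‖³`. -/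
theorem stmt12 {n : ℕ}
    (f : (Fin n → ℝ) → ℝ)
    (gradf : (Fin n → ℝ) → (Fin n → ℝ))
    (hessf : (Fin n → ℝ) → Matrix (Fin n) (Fin n) ℝ)
    (hgrad : ∀ y : Fin n → ℝ, HasFDerivAt f (dotCLM (gradf y)) y)
    (hhess : ∀ y : Fin n → ℝ, HasFDerivAt gradf (mulVecCLM (hessf y)) y)
    (hhesscont : Continuous hessf)
    (L_H : ℝ) (hLH : 0 ≤ L_H)
    (hlip : ∀ y z : Fin n → ℝ, opNorm (hessf y - hessf z) ≤ L_H * euclNorm (y - z))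
    (μ : ℝ) (hμ : μ ∈ Set.Ioo (0:ℝ) 1)
    (η : ℝ) (hη : η ∈ Set.Ioo (0:ℝ) 1)
    (β : ℝ) (hβ : β ∈ Set.Ioo (0:ℝ) 1)
    (x : Fin n → ℝ) (hx : ∀ i, 0 < x i)
    (d : Fin n → ℝ) (hdne : d ≠ 0)
    (hd : ‖(fun i => (min (x i) 1 / x i) * d i : Fin n → ℝ)‖ ≤ β)
    (g : Fin n → ℝ)
    (hg : g = fun i => min (x i) 1 * (gradf x i - μ / x i))
    (H : Matrix (Fin n) (Fin n) ℝ)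
    (hH : H = Matrix.diagonal (fun i => min (x i) 1)
        * (hessf x + μ • Matrix.diagonal (fun i => ((x i)^2)⁻¹))
        * Matrix.diagonal (fun i => min (x i) 1))
    (hgd : g ⬝ᵥ d ≤ 0)
    (hcurv : d ⬝ᵥ (H *ᵥ d) ≤ -(euclNorm d ^ 3)) :
    ∀ α ∈ Set.Ioc (0:ℝ) 1,
      α < 3 * (1-β)^2 / ((L_H + η) * (1-β)^2 + (2-β)) →
      f (x + α • (fun i => min (x i) 1 * d i : Fin n → ℝ))
          - μ * ∑ i, Real.log ((x + α • (fun i => min (x i) 1 * d i : Fin n → ℝ)) i)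
        - (f x - μ * ∑ i, Real.log (x i))
        < -(η/6) * α^3 * euclNorm d ^ 3 :=
  stmt12_general f gradf hessf hgrad hhess L_H hLH hlip μ hμ η β hβ x hx d hdne hd g hg H hH hgd
    hcurv
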